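/- Let L_4 = U^{⊕3} ⊕ E8(-1)^{⊕2} ⊕ ⟨-6⟩. If v ∈ L_4 is a primitive vector with div(v) = 6, then v² ≡ -6 (mod 72). -/
import Mathlib


open Matrix

/-- Gram matrix of the hyperbolic plane `U`. -/
def U2 : Matrix (Fin 2) (Fin 2) ℤ := !![0, 1; 1, 0]

/-- Gram matrix of the negative definite `E8(-1)` lattice. -/
def E8neg : Matrix (Fin 8) (Fin 8) ℤ :=
  !![-2, 1, 0, 0, 0, 0, 0, 0;
      1,-2, 1, 0, 0, 0, 0, 0;
      0, 1,-2, 1, 0, 0, 0, 0;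
      0, 0, 1,-2, 1, 0, 0, 0;
      0, 0, 0, 1,-2, 1, 0, 1;
      0, 0, 0, 0, 1,-2, 1, 0;
      0, 0, 0, 0, 0, 1,-2, 0;
      0, 0, 0, 0, 1, 0, 0,-2]

/-- Index type of the unimodular summand `U^3 ⊕ E8(-1)^2`. -/
abbrev KIdx := (Fin 2 ⊕ (Fin 2 ⊕ Fin 2)) ⊕ (Fin 8 ⊕ Fin 8)

/-- Gram matrix of `U^3 ⊕ E8(-1)^2`. -/
def GramK : Matrix KIdx KIdx ℤ :=
  Matrix.fromBlocks
    (Matrix.fromBlocks U2 0 0 (Matrix.fromBlocks U2 0 0 U2)) 0 0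
    (Matrix.fromBlocks E8neg 0 0 E8neg)

/-- Index type of `L_n = U^3 ⊕ E8(-1)^2 ⊕ ⟨-(2n-2)⟩`. -/
abbrev LIdx := KIdx ⊕ Fin 1

/-- Gram matrix of `L_n = U^3 ⊕ E8(-1)^2 ⊕ ⟨-(2n-2)⟩`. -/
def GramL (n : ℕ) : Matrix LIdx LIdx ℤ :=
  Matrix.fromBlocks GramK 0 0 !![-(2 * (n : ℤ) - 2)]

/-- The bilinear form of `L_n`. -/
def bil (n : ℕ) (v w : LIdx → ℤ) : ℤ := v ⬝ᵥ ((GramL n).mulVec w)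

/-- The `ℚ`-bilinear extension of the form of `L_n` to `L_n ⊗ ℚ`. -/
def bilQ (n : ℕ) (v w : LIdx → ℚ) : ℚ :=
  v ⬝ᵥ (((GramL n).map (Int.cast : ℤ → ℚ)).mulVec w)

/-- The inclusion `L_n ↪ L_n ⊗ ℚ`. -/
def toQ (v : LIdx → ℤ) : LIdx → ℚ := fun i => (v i : ℚ)

/-- The generator `δ` of the summand `⟨-(2n-2)⟩`. -/
def deltaVec : LIdx → ℤ := fun i => if i = Sum.inr 0 then 1 else 0

/-- A lattice vector is primitive if it is not a nontrivial multiple of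
another lattice vector. -/
def IsPrimitive (v : LIdx → ℤ) : Prop :=
  ∀ (k : ℤ) (w : LIdx → ℤ), v = k • w → IsUnit k

/-- `HasDiv n v m` says that `div(v) = m`, i.e. `(v, L_n) = mℤ`. -/
def HasDiv (n : ℕ) (v : LIdx → ℤ) (m : ℤ) : Prop :=
  Ideal.span (Set.range fun w => bil n v w) = Ideal.span {m}

/-- Inverse of `E8neg`. -/
def Einv : Matrix (Fin 8) (Fin 8) ℤ :=
  !![-2, -3, -4, -5, -6, -4, -2, -3;
     -3, -6, -8, -10, -12, -8, -4, -6;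
     -4, -8, -12, -15, -18, -12, -6, -9;
     -5, -10, -15, -20, -24, -16, -8, -12;
     -6, -12, -18, -24, -30, -20, -10, -15;
     -4, -8, -12, -16, -20, -14, -7, -10;
     -2, -4, -6, -8, -10, -7, -4, -5;
     -3, -6, -9, -12, -15, -10, -5, -8]

/-- Inverse of `GramK`. -/
def NK : Matrix KIdx KIdx ℤ :=
  Matrix.fromBlocks
    (Matrix.fromBlocks U2 0 0 (Matrix.fromBlocks U2 0 0 U2)) 0 0
    (Matrix.fromBlocks Einv 0 0 Einv)

lemma hU2 : U2 * U2 = 1 := by decide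
lemma hE8 : E8neg * Einv = 1 := by decide

lemma hKN : GramK * NK = 1 := by
  rw [GramK, NK, Matrix.fromBlocks_multiply, Matrix.fromBlocks_multiply,
    Matrix.fromBlocks_multiply, Matrix.fromBlocks_multiply]
  simp [hU2, hE8, ← Matrix.fromBlocks_one]

/-- Half of `U2`. -/
def AU : Matrix (Fin 2) (Fin 2) ℤ := !![0, 1; 0, 0]

/-- Half of `E8neg`. -/
def AE : Matrix (Fin 8) (Fin 8) ℤ :=
  !![-1, 0, 0, 0, 0, 0, 0, 0;
      1,-1, 0, 0, 0, 0, 0, 0;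
      0, 1,-1, 0, 0, 0, 0, 0;
      0, 0, 1,-1, 0, 0, 0, 0;
      0, 0, 0, 1,-1, 0, 0, 0;
      0, 0, 0, 0, 1,-1, 0, 0;
      0, 0, 0, 0, 0, 1,-1, 0;
      0, 0, 0, 0, 1, 0, 0,-1]

/-- Half of `GramK`. -/
def AK : Matrix KIdx KIdx ℤ :=
  Matrix.fromBlocks
    (Matrix.fromBlocks AU 0 0 (Matrix.fromBlocks AU 0 0 AU)) 0 0
    (Matrix.fromBlocks AE 0 0 AE)

lemma hAU : AU + AUᵀ = U2 := by decide
lemma hAE : AE + AEᵀ = E8neg := by decide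

lemma hAK : AK + AKᵀ = GramK := by
  rw [AK, GramK, Matrix.fromBlocks_transpose, Matrix.fromBlocks_transpose,
    Matrix.fromBlocks_transpose, Matrix.fromBlocks_transpose,
    Matrix.fromBlocks_add, Matrix.fromBlocks_add, Matrix.fromBlocks_add,
    Matrix.fromBlocks_add]
  simp [hAU, hAE]

lemma heven (x : KIdx → ℤ) : (2 : ℤ) ∣ x ⬝ᵥ GramK.mulVec x := by
  have h1 : x ⬝ᵥ AKᵀ.mulVec x = x ⬝ᵥ AK.mulVec x := by
    rw [Matrix.mulVec_transpose, dotProduct_comm, Matrix.dotProduct_mulVec]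
  have : x ⬝ᵥ GramK.mulVec x = 2 * (x ⬝ᵥ AK.mulVec x) := by
    rw [← hAK, Matrix.add_mulVec, dotProduct_add, h1]; ring
  exact ⟨_, this⟩

/-- in `L_4`, a primitive vector of divisor 6 has `v² ≡ -6 (mod 72)`. -/
theorem stmt_6 (v : LIdx → ℤ) (hprim : IsPrimitive v) (hdiv : HasDiv 4 v 6) :
    bil 4 v v ≡ -6 [ZMOD 72] := by
  -- every value of the form is divisible by 6
  have h6 : ∀ w, (6 : ℤ) ∣ bil 4 v w := by
    intro w
    have hmem : bil 4 v w ∈ Ideal.span (Set.range fun w => bil 4 v w) :=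
      Ideal.subset_span ⟨w, rfl⟩
    rw [hdiv] at hmem
    exact (Ideal.mem_span_singleton).mp hmem
  -- hence each coordinate of `vᵀ G` is divisible by 6
  have hg : ∀ j, (6 : ℤ) ∣ Matrix.vecMul v (GramL 4) j := by
    intro j
    have := h6 (Pi.single j 1)
    rwa [bil, Matrix.dotProduct_mulVec, dotProduct_single, mul_one] at this
  -- the `K`-part of `vᵀ G` equals `v_K ᵀ GramK`
  have hgl : ∀ j : KIdx, Matrix.vecMul (fun k => v (Sum.inl k)) GramK j
      = Matrix.vecMul v (GramL 4) (Sum.inl j) := by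
    intro j
    simp [Matrix.vecMul, dotProduct, Fintype.sum_sum_type, GramL]
  -- divisibility of the `K`-coordinates of `v`
  have hvK : ∀ k : KIdx, (6 : ℤ) ∣ v (Sum.inl k) := by
    intro k
    have hrec : (fun k => v (Sum.inl k)) =
        Matrix.vecMul (Matrix.vecMul (fun k => v (Sum.inl k)) GramK) NK := by
      rw [Matrix.vecMul_vecMul, hKN, Matrix.vecMul_one]
    have : v (Sum.inl k)
        = ∑ j, Matrix.vecMul (fun k => v (Sum.inl k)) GramK j * NK j k := by
      conv_lhs => rw [show v (Sum.inl k) = (fun k => v (Sum.inl k)) k from rfl, hrec]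
      rfl
    rw [this]
    exact Finset.dvd_sum fun j _ => Dvd.dvd.mul_right (by rw [hgl]; exact hg _) _
  set a : ℤ := v (Sum.inr 0) with ha
  -- coprimality of `a` with 6
  have key : ∀ p : ℤ, p ∣ 6 → p ∣ a → IsUnit p := by
    intro p hp6 hpa
    refine hprim p (fun i => v i / p) (funext fun i => ?_)
    have hdvd : p ∣ v i := by
      cases i with
      | inl k => exact hp6.trans (hvK k)
      | inr j =>
        have : j = 0 := Subsingleton.elim _ _
        rw [this]; exact hpa
    simp only [Pi.smul_apply, smul_eq_mul]
    exact (Int.mul_ediv_cancel' hdvd).symm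
  have h2 : ¬ (2 : ℤ) ∣ a := by
    intro h
    have := key 2 ⟨3, rfl⟩ h
    rw [Int.isUnit_iff] at this; omega
  have h3 : ¬ (3 : ℤ) ∣ a := by
    intro h
    have := key 3 ⟨2, rfl⟩ h
    rw [Int.isUnit_iff] at this; omega
  have h12 : (12 : ℤ) ∣ a * a - 1 := by
    obtain ⟨k, hk⟩ : ∃ k, a = 6 * k + 1 ∨ a = 6 * k + 5 := ⟨a / 6, by omega⟩
    rcases hk with hk | hk
    · exact ⟨3 * k ^ 2 + k, by rw [hk]; ring⟩
    · exact ⟨3 * k ^ 2 + 5 * k + 2, by rw [hk]; ring⟩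
  -- write `v = 6u ⊕ a`
  set u : KIdx → ℤ := fun k => v (Sum.inl k) / 6 with hudef
  have hu : ∀ k, v (Sum.inl k) = 6 * u k := fun k =>
    (Int.mul_ediv_cancel' (hvK k)).symm
  have hv : v = Sum.elim ((6 : ℤ) • u) (fun _ => a) := by
    funext i
    cases i with
    | inl k => simpa using hu k
    | inr j =>
      have : j = 0 := Subsingleton.elim _ _
      rw [this]; rfl
  -- split the quadratic form
  have hsplit : bil 4 v v = 36 * (u ⬝ᵥ GramK.mulVec u) - 6 * (a * a) := by
    rw [bil, hv, GramL, Matrix.fromBlocks_mulVec, sumElim_dotProduct_sumElim]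
    simp only [Sum.elim_comp_inl, Sum.elim_comp_inr]
    simp only [Matrix.zero_mulVec, smul_zero, add_zero, zero_add, Matrix.mulVec_smul,
      dotProduct_smul, smul_dotProduct, smul_eq_mul]
    have hfin : (fun _ : Fin 1 => a) ⬝ᵥ
        (!![-(2 * ((4:ℕ) : ℤ) - 2)]).mulVec (fun _ => a) = -6 * (a * a) := by
      simp [dotProduct, Matrix.mulVec, Fin.sum_univ_one]
      ring
    rw [hfin]
    ring
  have hQ := heven u
  -- conclude
  show bil 4 v v % 72 = (-6) % 72
  omega
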